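/- arXiv:1001.1195 — 3 statements merged into one kernel-verified Lean document; each statement's English description precedes it below -/
import Mathlib

section
/- Define c : ℕ → ℕ → ℝ by c(2,0) = c(2,1) = 1/2, c(2,i) = 0 for i ≥ 2, and for n ≥ 3: c(n,0) = 1/2, c(n,i) = ((n-2)/n)·c(n-1,i) + (1/n)·c(n-1,i-1) for i ≥ 1. Then for every fixed i ≥ 0, lim_{n→∞} c(n,i) = (1/2)^{i+1}. -/
/-!
Multiplying the recurrence by `n (n - 1)` makes it telescope: the increments of
`n (n - 1) c(n, i + 1)` are `(n - 1) c(n - 1, i)`, while those of `n (n - 1)` are `2 (n - 1)`.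
By the Stolz–Cesàro theorem, `c(n, i + 1)` therefore tends to half the limit of `c(n, i)`,
and `c(n, 0) = 1/2` starts the induction on `i`.
-/

open Finset Filter

/-- The children-distribution recurrence: `c 2 0 = c 2 1 = 1/2`, `c 2 i = 0` for
`i ≥ 2`, and for `n ≥ 3`: `c n 0 = 1/2` and
`c n i = ((n-2)/n)·c (n-1) i + (1/n)·c (n-1) (i-1)` for `i ≥ 1`. -/
noncomputable def c : ℕ → ℕ → ℝ
  | 0, _ => 0
  | 1, _ => 0
  | 2, 0 => 1 / 2
  | 2, 1 => 1 / 2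
  | 2, _ + 2 => 0
  | _ + 3, 0 => 1 / 2
  | n + 3, i + 1 =>
      (((n : ℝ) + 1) / ((n : ℝ) + 3)) * c (n + 2) (i + 1)
        + (1 / ((n : ℝ) + 3)) * c (n + 2) i

open Asymptotics Topology

theorem tendsto_div_of_tendsto_sub_div_sub {a b : ℕ → ℝ} {L : ℝ} (hb_mono : StrictMono b)
    (hb : Tendsto b atTop atTop)
    (h : Tendsto (fun n => (a (n + 1) - a n) / (b (n + 1) - b n)) atTop (𝓝 L)) :
    Tendsto (fun n => a n / b n) atTop (𝓝 L) := by
  have hstep_pos (n : ℕ) : 0 < b (n + 1) - b n := sub_pos.2 (hb_mono n.lt_succ_self)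
  have hgrowth_pos : ∀ᶠ n in atTop, 0 < b n - b 0 := by
    filter_upwards [eventually_gt_atTop 0] with n hn using sub_pos.2 (hb_mono hn)
  have hstep : (fun n => a (n + 1) - a n - L * (b (n + 1) - b n))
      =o[atTop] fun n => b (n + 1) - b n := by
    rw [isLittleO_iff_tendsto' (.of_forall fun n hn => absurd hn (hstep_pos n).ne')]
    refine (tendsto_sub_nhds_zero_iff.2 h).congr fun n => ?_
    field_simp [(hstep_pos n).ne']
  have hsum : Tendsto (fun n => (a n - a 0 - L * (b n - b 0)) / (b n - b 0)) atTop (𝓝 0) := by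
    have hgrowth : Tendsto (fun n => ∑ i ∈ range n, (b (i + 1) - b i)) atTop atTop := by
      simpa only [sum_range_sub, ← sub_eq_add_neg] using tendsto_atTop_add_const_right _ (-b 0) hb
    have htotal := hstep.sum_range (fun n => (hstep_pos n).le) hgrowth
    simp only [sum_sub_distrib (f := fun i => a (i + 1) - a i), ← mul_sum, sum_range_sub] at htotal
    refine (isLittleO_iff_tendsto' ?_).1 htotal
    filter_upwards [hgrowth_pos] with n hn h0 using absurd h0 hn.ne'
  have hratio : Tendsto (fun n => 1 - b 0 / b n) atTop (𝓝 1) := by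
    simpa using tendsto_const_nhds.sub (tendsto_const_nhds.div_atTop hb)
  have hrest : Tendsto (fun n => (a 0 - L * b 0) / b n) atTop (𝓝 0) :=
    tendsto_const_nhds.div_atTop hb
  have hlim := ((hsum.mul hratio).add hrest).const_add L
  rw [zero_mul, add_zero, add_zero] at hlim
  refine hlim.congr' ?_
  filter_upwards [hb.eventually_gt_atTop 0, hgrowth_pos] with n hbn hn
  field_simp
  ring

theorem c_add_two_zero (n : ℕ) : c (n + 2) 0 = 1 / 2 := by
  cases n <;> rfl

theorem c_add_three_succ_mul (n i : ℕ) :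
    ((n : ℝ) + 3) * (n + 2) * c (n + 3) (i + 1)
      = ((n : ℝ) + 2) * (n + 1) * c (n + 2) (i + 1) + ((n : ℝ) + 2) * c (n + 2) i := by
  rw [c]
  field_simp

theorem tendsto_c_add_two_succ {i : ℕ} {L : ℝ}
    (h : Tendsto (fun n => c (n + 2) i) atTop (𝓝 L)) :
    Tendsto (fun n => c (n + 2) (i + 1)) atTop (𝓝 (L / 2)) := by
  have hb_mono : StrictMono fun n : ℕ => ((n : ℝ) + 2) * (n + 1) :=
    strictMono_nat_of_lt_succ fun n => by push_cast; nlinarith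
  have hb : Tendsto (fun n : ℕ => ((n : ℝ) + 2) * (n + 1)) atTop atTop := by
    refine tendsto_atTop_mono (fun n => ?_) tendsto_natCast_atTop_atTop
    nlinarith
  have hquot := tendsto_div_of_tendsto_sub_div_sub
    (a := fun n => ((n : ℝ) + 2) * (n + 1) * c (n + 2) (i + 1))
    hb_mono hb ((h.div_const 2).congr fun n => ?_)
  · refine hquot.congr fun n => ?_
    field_simp
  · have hrec := c_add_three_succ_mul n i
    push_cast
    rw [eq_div_iff (by nlinarith)]
    linear_combination -hrec

/-- for every fixed `i ≥ 0`, `lim_{n→∞} c(n,i) = (1/2)^{i+1}`: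
the number of children is asymptotically geometric with parameter `1/2`. -/
theorem children_tendsto_geometric (i : ℕ) :
    Tendsto (fun n : ℕ => c n i) atTop (nhds ((1 / 2 : ℝ) ^ (i + 1))) := by
  rw [← tendsto_add_atTop_iff_nat 2]
  induction i with
  | zero => simpa only [c_add_two_zero, zero_add, pow_one] using tendsto_const_nhds
  | succ i ih =>
    rw [pow_succ, mul_one_div]
    exact tendsto_c_add_two_succ ih
end

section
/- With c(n,i) defined by the recurrence c(n,0) = 1/2 and c(n,i) = ((n-2)/n)·c(n-1,i) + (1/n)·c(n-1,i-1) for n ≥ 3, with initial values c(3,0)=1/2, c(3,1)=1/3, c(3,2)=1/6, the function i ↦ c(n,i) is strictly decreasing in i for 0 ≤ i ≤ n-1, for every n ≥ 3. -/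
open Finset Filter

/-!
The recurrence writes `c(n, i+1)` as `a·c(n-1, i+1) + b·c(n-1, i)` with weights
`a = (n-2)/n ≥ 0` and `b = 1/n > 0` of total mass `(n-1)/n < 1`. Hence the bound
`c ≤ 1/2` propagates and even becomes strict, which gives `c(n,1) < 1/2 = c(n,0)`;
monotonicity in `i` propagates through the nonnegative weights, and strict
monotonicity through the positive weight `b`.
-/

noncomputable def cStep (n : ℕ) (x y : ℝ) : ℝ :=
  ((n : ℝ) + 1) / ((n : ℝ) + 3) * x + 1 / ((n : ℝ) + 3) * y

theorem c_add_three_zero (n : ℕ) : c (n + 3) 0 = 1 / 2 := by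
  rw [c]

theorem c_add_three_succ (n i : ℕ) :
    c (n + 3) (i + 1) = cStep n (c (n + 2) (i + 1)) (c (n + 2) i) := by
  rw [c, cStep]

theorem cStep_lt_half (n : ℕ) {x y : ℝ} (hx : x ≤ 1 / 2) (hy : y ≤ 1 / 2) :
    cStep n x y < 1 / 2 := by
  have hpos : (0 : ℝ) < n + 3 := by positivity
  rw [cStep, div_mul_eq_mul_div, div_mul_eq_mul_div, ← add_div, div_lt_iff₀ hpos]
  nlinarith [(n.cast_nonneg : (0 : ℝ) ≤ n)]

theorem cStep_le_cStep (n : ℕ) {x x' y y' : ℝ} (hx : x' ≤ x) (hy : y' ≤ y) :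
    cStep n x' y' ≤ cStep n x y := by
  unfold cStep
  gcongr

theorem cStep_lt_cStep (n : ℕ) {x x' y y' : ℝ} (hx : x' ≤ x) (hy : y' < y) :
    cStep n x' y' < cStep n x y := by
  have hb : (0 : ℝ) < 1 / ((n : ℝ) + 3) := by positivity
  exact add_lt_add_of_le_of_lt (by gcongr) (mul_lt_mul_of_pos_left hy hb)

theorem c_le_half : ∀ n i, c n i ≤ 1 / 2
  | 0, _ | 1, _ | 2, 0 | 2, 1 | 2, _ + 2 => by norm_num [c]
  | n + 3, 0 => (c_add_three_zero n).le
  | n + 3, i + 1 => by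
    rw [c_add_three_succ]
    exact (cStep_lt_half n (c_le_half _ _) (c_le_half _ _)).le

theorem c_succ_le : ∀ n i, c n (i + 1) ≤ c n i
  | 0, _ | 1, _ | 2, 0 | 2, 1 | 2, _ + 2 => by norm_num [c]
  | n + 3, 0 => by
    rw [c_add_three_succ, c_add_three_zero]
    exact (cStep_lt_half n (c_le_half _ _) (c_le_half _ _)).le
  | n + 3, i + 1 => by
    rw [c_add_three_succ, c_add_three_succ]
    exact cStep_le_cStep n (c_succ_le _ _) (c_succ_le _ _)

theorem c_add_three_succ_lt : ∀ n i, i ≤ n + 1 → c (n + 3) (i + 1) < c (n + 3) i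
  | n, 0, _ => by
    rw [c_add_three_succ, c_add_three_zero]
    exact cStep_lt_half n (c_le_half _ _) (c_le_half _ _)
  | 0, 1, _ => by norm_num [c]
  | 0, _ + 2, h => by omega
  | n + 1, i + 1, h => by
    rw [c_add_three_succ (n + 1) (i + 1), c_add_three_succ (n + 1) i]
    exact cStep_lt_cStep (n + 1) (c_succ_le _ _) (c_add_three_succ_lt n i (by omega))

/-- with the initial values `c(3,0) = 1/2`, `c(3,1) = 1/3`,
`c(3,2) = 1/6`, the map `i ↦ c(n,i)` is strictly decreasing on `0 ≤ i ≤ n-1`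
for every `n ≥ 3`. -/
theorem children_strict_decreasing :
    c 3 0 = 1 / 2 ∧ c 3 1 = 1 / 3 ∧ c 3 2 = 1 / 6 ∧
    ∀ n : ℕ, 3 ≤ n → ∀ i : ℕ, 1 ≤ i → i ≤ n - 1 → c n i < c n (i - 1) := by
  refine ⟨by norm_num [c], by norm_num [c], by norm_num [c], ?_⟩
  intro n hn i hi hin
  obtain ⟨m, rfl⟩ : ∃ m, n = m + 3 := ⟨n - 3, by omega⟩
  obtain ⟨j, rfl⟩ : ∃ j, i = j + 1 := ⟨i - 1, by omega⟩
  simpa using c_add_three_succ_lt m j (by omega)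
end

section
/- With g(n,j) defined by g(1,0)=1 and g(n,j) = ((n-1)/n)·g(n-1,j) + (1/n)·g(n-1,j-1), the variance Var_n[G] = Σ_j (j − E_n[G])²·g(n,j) equals H_n − H_{n,2}, where H_n = Σ_{i=1}^n 1/i and H_{n,2} = Σ_{i=1}^n 1/i². -/
open Finset Filter

/-- The generation-distribution recurrence (depth index in `ℤ` so that
`g(n, -1) = 0` holds automatically): `g(1,0) = 1`, `g(1,j) = 0` for `j ≠ 0`,
and `g(n,j) = ((n-1)/n)·g(n-1,j) + (1/n)·g(n-1,j-1)` for `n ≥ 2`. -/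
noncomputable def g : ℕ → ℤ → ℝ
  | 0, _ => 0
  | 1, j => if j = 0 then 1 else 0
  | n + 2, j =>
      (((n : ℝ) + 1) / ((n : ℝ) + 2)) * g (n + 1) j
        + (1 / ((n : ℝ) + 2)) * g (n + 1) (j - 1)

/-- The `n`-th harmonic number `H_n = Σ_{i=1}^n 1/i`. -/
noncomputable def harmonicR (n : ℕ) : ℝ := ∑ i ∈ Finset.range n, (1 : ℝ) / (i + 1)

/-- `E_n[G] = Σ_{j≥0} j·g(n,j)`, the mean generation. -/
noncomputable def meanGen (n : ℕ) : ℝ := ∑' j : ℕ, (j : ℝ) * g n (j : ℤ)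

/-- `H_{n,2} = Σ_{i=1}^n 1/i²`. -/
noncomputable def harmonicR2 (n : ℕ) : ℝ := ∑ i ∈ Finset.range n, (1 : ℝ) / ((i : ℝ) + 1) ^ 2

lemma g_eq_zero : ∀ (n : ℕ) (j : ℤ), (j < 0 ∨ (n : ℤ) ≤ j) → g n j = 0
  | 0, _, _ => rfl
  | 1, j, h => by
      simp only [g]
      rw [if_neg]; omega
  | n+2, j, h => by
      simp only [g]
      rw [g_eq_zero (n+1) j (by push_cast at h ⊢; omega),
          g_eq_zero (n+1) (j-1) (by push_cast at h ⊢; omega)]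
      ring

lemma sum_g_rec (k : ℕ) (f : ℕ → ℝ) :
    ∑ j ∈ range (k+2), f j * g (k+2) (j : ℤ)
      = (((k:ℝ)+1)/((k:ℝ)+2)) * ∑ j ∈ range (k+1), f j * g (k+1) (j : ℤ)
        + (1/((k:ℝ)+2)) * ∑ j ∈ range (k+1), f (j+1) * g (k+1) (j : ℤ) := by
  have h1 : ∑ j ∈ range (k+2), f j * g (k+2) (j : ℤ)
      = ∑ j ∈ range (k+2), ((((k:ℝ)+1)/((k:ℝ)+2)) * (f j * g (k+1) (j : ℤ))
          + (1/((k:ℝ)+2)) * (f j * g (k+1) ((j : ℤ) - 1))) := by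
    refine Finset.sum_congr rfl fun j _ => ?_
    simp only [g]; ring
  rw [h1, Finset.sum_add_distrib, ← Finset.mul_sum, ← Finset.mul_sum]
  congr 1
  · congr 1
    rw [Finset.sum_range_succ,
      show g (k+1) (((k+1:ℕ)):ℤ) = 0 from g_eq_zero _ _ (by push_cast; omega)]
    simp
  · congr 1
    rw [Finset.sum_range_succ']
    have h0 : g (k+1) (((0:ℕ):ℤ) - 1) = 0 := g_eq_zero _ _ (by omega)
    rw [h0, mul_zero, add_zero]
    refine Finset.sum_congr rfl fun j _ => ?_
    push_cast
    ring_nf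

lemma S0 : ∀ n : ℕ, 1 ≤ n → ∑ j ∈ range n, (1:ℝ) * g n (j : ℤ) = 1
  | 1, _ => by simp [g]
  | k+2, _ => by
      rw [sum_g_rec k (fun _ => 1), S0 (k+1) (by omega)]
      have : ((k:ℝ)+2) ≠ 0 := by positivity
      field_simp
      ring

lemma S1 : ∀ n : ℕ, 1 ≤ n →
    ∑ j ∈ range n, (j:ℝ) * g n (j : ℤ) = harmonicR n - 1
  | 1, _ => by simp [g, harmonicR]
  | k+2, _ => by
      rw [sum_g_rec k (fun j => (j:ℝ))]
      have hshift : ∑ j ∈ range (k+1), ((j:ℝ)+1) * g (k+1) (j : ℤ)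
          = ∑ j ∈ range (k+1), ((j:ℝ) * g (k+1) (j : ℤ) + 1 * g (k+1) (j : ℤ)) := by
        refine Finset.sum_congr rfl fun j _ => ?_; ring
      simp only [Nat.cast_add, Nat.cast_one]
      rw [hshift, Finset.sum_add_distrib, S1 (k+1) (by omega), S0 (k+1) (by omega)]
      have hH : harmonicR (k+2) = harmonicR (k+1) + 1/((k:ℝ)+2) := by
        rw [harmonicR, harmonicR, Finset.sum_range_succ]; push_cast; ring
      rw [hH]
      have : ((k:ℝ)+2) ≠ 0 := by positivity
      field_simp
      ring

lemma S2 : ∀ n : ℕ, 1 ≤ n →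
    ∑ j ∈ range n, (j:ℝ)^2 * g n (j : ℤ)
      = (harmonicR n - 1)^2 + harmonicR n - harmonicR2 n
  | 1, _ => by simp [g, harmonicR, harmonicR2]
  | k+2, _ => by
      rw [sum_g_rec k (fun j => (j:ℝ)^2)]
      have hshift : ∑ j ∈ range (k+1), ((j:ℝ)+1)^2 * g (k+1) (j : ℤ)
          = ∑ j ∈ range (k+1), ((j:ℝ)^2 * g (k+1) (j : ℤ)
              + (2 * ((j:ℝ) * g (k+1) (j : ℤ)) + 1 * g (k+1) (j : ℤ))) := by
        refine Finset.sum_congr rfl fun j _ => ?_; ring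
      simp only [Nat.cast_add, Nat.cast_one]
      rw [hshift, Finset.sum_add_distrib, Finset.sum_add_distrib, ← Finset.mul_sum,
        S2 (k+1) (by omega), S1 (k+1) (by omega), S0 (k+1) (by omega)]
      have hH : harmonicR (k+2) = harmonicR (k+1) + 1/((k:ℝ)+2) := by
        rw [harmonicR, harmonicR, Finset.sum_range_succ]; push_cast; ring
      have hH2 : harmonicR2 (k+2) = harmonicR2 (k+1) + 1/((k:ℝ)+2)^2 := by
        rw [harmonicR2, harmonicR2, Finset.sum_range_succ]; push_cast; ring
      rw [hH, hH2]
      have : ((k:ℝ)+2) ≠ 0 := by positivity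
      field_simp
      ring

lemma tsum_g (n : ℕ) (f : ℕ → ℝ) :
    ∑' j : ℕ, f j * g n (j : ℤ) = ∑ j ∈ range n, f j * g n (j : ℤ) := by
  refine tsum_eq_sum fun j hj => ?_
  rw [g_eq_zero n (j : ℤ) (Or.inr (by exact_mod_cast Nat.le_of_lt_succ (Nat.lt_succ_of_le (Finset.mem_range.not.mp hj |> Nat.le_of_not_lt))))]
  ring

lemma meanGen_eq (n : ℕ) (hn : 1 ≤ n) : meanGen n = harmonicR n - 1 := by
  rw [meanGen, tsum_g n (fun j => (j:ℝ)), S1 n hn]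

/-- the variance of the generation,
`Var_n[G] = Σ_j (j − E_n[G])²·g(n,j)`, equals `H_n − H_{n,2}` for `n ≥ 1`. -/
theorem variance_generation (n : ℕ) (hn : 1 ≤ n) :
    ∑' j : ℕ, ((j : ℝ) - meanGen n) ^ 2 * g n (j : ℤ) = harmonicR n - harmonicR2 n := by
  rw [tsum_g n (fun j => ((j:ℝ) - meanGen n)^2)]
  have hexp : ∑ j ∈ range n, ((j:ℝ) - meanGen n)^2 * g n (j : ℤ)
      = ∑ j ∈ range n, ((j:ℝ)^2 * g n (j : ℤ)
          + ((-2 * meanGen n) * ((j:ℝ) * g n (j : ℤ))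
            + meanGen n ^ 2 * ((1:ℝ) * g n (j : ℤ)))) := by
    refine Finset.sum_congr rfl fun j _ => ?_; ring
  rw [hexp, Finset.sum_add_distrib, Finset.sum_add_distrib, ← Finset.mul_sum, ← Finset.mul_sum,
    S2 n hn, S1 n hn, S0 n hn, meanGen_eq n hn]
  ring
end
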